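/- arXiv:1809.11148 — 4 statements merged into one kernel-verified Lean document; each statement's English description precedes it below -/
import Mathlib

section
/- Let h : [0,1]^d → ℝ, let {B_i}_{i∈I} be a finite family of closed convex subsets of ℝ^d, let E ⊂ {0,1}^d, and let δ > 0. Suppose {0,1}^d \ E is contained in the union of the B_i, and for every i ∈ I and all x, y ∈ B_i we have h(y) − h(x) ≤ δ. Then for any p ∈ [0,1] and t ∈ ℝ, μ_p({x ∈ {0,1}^d : h(x) ≥ t}) ≤ |I|·exp(−φ_{h,p}(t−δ)) + μ_p(E), where φ_{h,p}(s) = inf{ I_p(x) : x ∈ [0,1]^d, h(x) ≥ s } and I_p(x) = Σ_i [x_i log(x_i/p) + (1−x_i) log((1−x_i)/(1−p))]. -/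
/-!
Let `A` be a set of vertices of the cube with `μ_p(A) = m > 0`, and let `ȳ` be the barycentre of
`μ_p` conditioned on `A`. Comparing the conditioned measure with the product measure whose
marginals are Bernoulli(`ȳ i`), Gibbs' inequality gives `I_p(ȳ) ≤ -log m`, i.e.
`μ_p(A) ≤ exp(-I_p(ȳ))`. For the part of the tail `{h ≥ t}` covered by `B i`, convexity puts `ȳ`
in `B i`, where `h ≥ t - δ` by the fluctuation bound; so each piece has mass at most
`exp(-φ(t - δ))`, and a union bound over `I` together with `E` finishes the proof.
-/

/-- Relative entropy of a Bernoulli(x) against Bernoulli(p) (with the convention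
`0·log 0 = 0`, automatic since `Real.log 0 = 0`). -/
noncomputable def Ip (p x : ℝ) : ℝ :=
  x * Real.log (x / p) + (1 - x) * Real.log ((1 - x) / (1 - p))

/-- `I_p` of a point of `[0,1]^d`. -/
noncomputable def IpVec {d : ℕ} (p : ℝ) (x : Fin d → ℝ) : ℝ := ∑ i, Ip p (x i)

/-- Embedding of the discrete cube `{0,1}^d` into `[0,1]^d ⊂ ℝ^d`. -/
def cubeEmbed {d : ℕ} (x : Fin d → Bool) : Fin d → ℝ := fun i => if x i then 1 else 0

/-- The product Bernoulli(p) weight of a point of the discrete cube. -/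
noncomputable def cubeWeight {d : ℕ} (p : ℝ) (x : Fin d → Bool) : ℝ :=
  ∏ i, if x i then p else 1 - p

open Real Finset

lemma cubeWeight_nonneg {d : ℕ} {p : ℝ} (hp : p ∈ Set.Icc (0 : ℝ) 1) (x : Fin d → Bool) :
    0 ≤ cubeWeight p x :=
  prod_nonneg fun i _ => by
    cases x i
    · exact sub_nonneg.2 hp.2
    · exact hp.1

lemma neg_le_mul_log_div {a b : ℝ} (ha : 0 ≤ a) (hb : 0 ≤ b) : -b ≤ a * log (a / b) := by
  rcases ha.eq_or_lt with rfl | ha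
  · simpa using hb
  rcases hb.eq_or_lt with rfl | hb
  · simp
  calc -b ≤ a * (1 - (a / b)⁻¹) := by field_simp; linarith
    _ ≤ a * log (a / b) := by gcongr; exact one_sub_inv_le_log_of_pos (div_pos ha hb)

lemma neg_one_le_Ip {p x : ℝ} (hp : p ∈ Set.Icc (0 : ℝ) 1) (hx : x ∈ Set.Icc (0 : ℝ) 1) :
    -1 ≤ Ip p x := by
  have h₁ := neg_le_mul_log_div hx.1 hp.1
  have h₂ := neg_le_mul_log_div (sub_nonneg.2 hx.2) (sub_nonneg.2 hp.2)
  rw [Ip]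
  linarith

lemma neg_le_IpVec {d : ℕ} {p : ℝ} (hp : p ∈ Set.Icc (0 : ℝ) 1) {y : Fin d → ℝ}
    (hy : ∀ i, y i ∈ Set.Icc (0 : ℝ) 1) : -(d : ℝ) ≤ IpVec p y := by
  simpa [IpVec] using sum_le_sum fun i (_ : i ∈ univ) => neg_one_le_Ip hp (hy i)

lemma sum_mul_log_div_nonpos {α : Type*} {s : Finset α} {ν q : α → ℝ}
    (hν : ∀ x ∈ s, 0 ≤ ν x) (hν₁ : ∑ x ∈ s, ν x = 1) (hq : ∀ x ∈ s, 0 ≤ q x)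
    (hq₁ : ∑ x ∈ s, q x ≤ 1) (hνq : ∀ x ∈ s, 0 < ν x → 0 < q x) :
    ∑ x ∈ s, ν x * log (q x / ν x) ≤ 0 := by
  have hterm : ∀ x ∈ s, ν x * log (q x / ν x) ≤ q x - ν x := by
    intro x hx
    rcases (hν x hx).eq_or_lt with h₀ | hpos
    · simp [← h₀, hq x hx]
    calc ν x * log (q x / ν x) ≤ ν x * (q x / ν x - 1) := by
          gcongr; exact log_le_sub_one_of_pos (div_pos (hνq x hx hpos) hpos)
      _ = q x - ν x := by field_simp
  calc ∑ x ∈ s, ν x * log (q x / ν x) ≤ ∑ x ∈ s, (q x - ν x) := sum_le_sum hterm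
    _ ≤ 0 := by rw [sum_sub_distrib, hν₁]; linarith

def bernWeight (r : ℝ) (b : Bool) : ℝ := if b then r else 1 - r

def productWeight {d : ℕ} (y : Fin d → ℝ) (x : Fin d → Bool) : ℝ := ∏ i, bernWeight (y i) (x i)

lemma sum_productWeight {d : ℕ} (y : Fin d → ℝ) : ∑ x, productWeight y x = 1 := by
  calc ∑ x, productWeight y x = ∏ i, ∑ b, bernWeight (y i) b := (Fintype.prod_sum _).symm
    _ = 1 := by simp [bernWeight]

lemma Ip_eq_sum_bool (p r : ℝ) :
    Ip p r = ∑ b, bernWeight r b * log (bernWeight r b / bernWeight p b) := by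
  simp [Ip, bernWeight]

section Barycenter

variable {d : ℕ} {A : Finset (Fin d → Bool)} {ν : (Fin d → Bool) → ℝ}

lemma bernWeight_sum_smul_cubeEmbed_apply (hν₁ : ∑ x ∈ A, ν x = 1) (i : Fin d) (b : Bool) :
    bernWeight ((∑ x ∈ A, ν x • cubeEmbed x) i) b = ∑ x ∈ A with x i = b, ν x := by
  have htrue : (∑ x ∈ A, ν x • cubeEmbed x) i = ∑ x ∈ A with x i = true, ν x := by
    simp [Finset.sum_apply, cubeEmbed, sum_filter]
  cases b
  · rw [bernWeight, if_neg Bool.false_ne_true, htrue, ← hν₁,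
      ← sum_filter_add_sum_filter_not A (fun x => x i = true)]
    simp
  · rw [bernWeight, if_pos rfl, htrue]

lemma IpVec_sum_smul_cubeEmbed (p : ℝ) (hν₁ : ∑ x ∈ A, ν x = 1) :
    IpVec p (∑ x ∈ A, ν x • cubeEmbed x) = ∑ x ∈ A, ν x *
      ∑ i, log (bernWeight ((∑ x ∈ A, ν x • cubeEmbed x) i) (x i) / bernWeight p (x i)) := by
  set y := ∑ x ∈ A, ν x • cubeEmbed x
  set L : Fin d → Bool → ℝ := fun i b => log (bernWeight (y i) b / bernWeight p b)
  calc IpVec p y = ∑ i, ∑ b, ∑ x ∈ A with x i = b, ν x * L i b := by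
        refine sum_congr rfl fun i _ => ((Ip_eq_sum_bool _ _).trans ?_)
        refine sum_congr rfl fun b _ => ?_
        rw [← sum_mul, ← bernWeight_sum_smul_cubeEmbed_apply hν₁]
    _ = ∑ i, ∑ b, ∑ x ∈ A with x i = b, ν x * L i (x i) := by
        refine sum_congr rfl fun i _ => sum_congr rfl fun b _ => sum_congr rfl fun x hx => ?_
        rw [(mem_filter.1 hx).2]
    _ = ∑ x ∈ A, ν x * ∑ i, L i (x i) := by
        simp_rw [sum_fiberwise, mul_sum]; exact sum_comm

lemma IpVec_sum_smul_cubeEmbed_le {p : ℝ} (hν : ∀ x ∈ A, 0 ≤ ν x) (hν₁ : ∑ x ∈ A, ν x = 1)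
    (hac : ∀ x ∈ A, 0 < ν x → cubeWeight p x ≠ 0) :
    IpVec p (∑ x ∈ A, ν x • cubeEmbed x) ≤ ∑ x ∈ A, ν x * log (ν x / cubeWeight p x) := by
  set y := ∑ x ∈ A, ν x • cubeEmbed x
  have hmarg := bernWeight_sum_smul_cubeEmbed_apply hν₁
  have hmarg_ge : ∀ x ∈ A, ∀ i, ν x ≤ bernWeight (y i) (x i) := fun x hx i => by
    rw [hmarg]
    exact single_le_sum (fun z hz => hν z (mem_filter.1 hz).1) (mem_filter.2 ⟨hx, rfl⟩)
  have hq : ∀ x, 0 ≤ productWeight y x := fun x =>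
    prod_nonneg fun i _ => (hmarg i _).symm ▸ sum_nonneg fun z hz => hν z (mem_filter.1 hz).1
  have hq₁ : ∑ x ∈ A, productWeight y x ≤ 1 := by
    calc ∑ x ∈ A, productWeight y x ≤ ∑ x, productWeight y x :=
          sum_le_sum_of_subset_of_nonneg (subset_univ A) fun x _ _ => hq x
      _ = 1 := sum_productWeight y
  have hνq : ∀ x ∈ A, 0 < ν x → 0 < productWeight y x := fun x hx hpos =>
    prod_pos fun i _ => hpos.trans_le (hmarg_ge x hx i)
  have hsplit : ∀ x ∈ A, ν x * ∑ i, log (bernWeight (y i) (x i) / bernWeight p (x i)) =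
      ν x * log (productWeight y x / ν x) + ν x * log (ν x / cubeWeight p x) := by
    intro x hx
    rcases (hν x hx).eq_or_lt with h₀ | hpos
    · simp [← h₀]
    have hw := hac x hx hpos
    have hp_ne : ∀ i, bernWeight p (x i) ≠ 0 := fun i => (prod_ne_zero_iff.1 hw) i (mem_univ i)
    rw [← log_prod fun i _ => div_ne_zero (hpos.trans_le (hmarg_ge x hx i)).ne' (hp_ne i),
      prod_div_distrib, ← mul_add, ← log_mul (div_pos (hνq x hx hpos) hpos).ne'
      (div_ne_zero hpos.ne' hw), div_mul_div_cancel₀ hpos.ne']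
    rfl
  rw [IpVec_sum_smul_cubeEmbed p hν₁, sum_congr rfl hsplit, sum_add_distrib]
  linarith [sum_mul_log_div_nonpos hν hν₁ (fun x _ => hq x) hq₁ hνq]

end Barycenter

lemma sum_cubeWeight_le_exp_neg_IpVec {d : ℕ} {p : ℝ} (hp : p ∈ Set.Icc (0 : ℝ) 1)
    {A : Finset (Fin d → Bool)} (hm : 0 < ∑ x ∈ A, cubeWeight p x) :
    ∑ x ∈ A, cubeWeight p x ≤ exp (-IpVec p
      (∑ x ∈ A, (cubeWeight p x / ∑ z ∈ A, cubeWeight p z) • cubeEmbed x)) := by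
  set m := ∑ x ∈ A, cubeWeight p x
  have hν₁ : ∑ x ∈ A, cubeWeight p x / m = 1 := by rw [← sum_div, div_self hm.ne']
  have hKL := IpVec_sum_smul_cubeEmbed_le
    (fun x _ => div_nonneg (cubeWeight_nonneg hp x) hm.le) hν₁
    fun x _ hpos => ((div_pos_iff_of_pos_right hm).1 hpos).ne'
  have hlog : ∀ x ∈ A, cubeWeight p x / m * log (cubeWeight p x / m / cubeWeight p x) =
      cubeWeight p x / m * -log m := by
    intro x _
    rcases eq_or_ne (cubeWeight p x) 0 with hw | hw
    · simp [hw]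
    · rw [div_div_cancel_left' hw, log_inv]
  rw [sum_congr rfl hlog, ← sum_mul, hν₁, one_mul] at hKL
  calc m = exp (log m) := (exp_log hm).symm
    _ ≤ _ := exp_le_exp.2 (by linarith)

lemma sum_cubeWeight_le_exp_neg_of_convex {d : ℕ} {p : ℝ} (hp : p ∈ Set.Icc (0 : ℝ) 1)
    {K : Set (Fin d → ℝ)} (hK : Convex ℝ K) {A : Finset (Fin d → Bool)}
    (hA : ∀ x ∈ A, cubeEmbed x ∈ K) {c : ℝ}
    (hc : ∀ y ∈ K, (∀ i, y i ∈ Set.Icc (0 : ℝ) 1) → c ≤ IpVec p y) :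
    ∑ x ∈ A, cubeWeight p x ≤ exp (-c) := by
  rcases (sum_nonneg fun x (_ : x ∈ A) => cubeWeight_nonneg hp x).eq_or_lt with hm | hm
  · exact hm ▸ (exp_pos _).le
  have hcube : Convex ℝ (K ∩ Set.univ.pi fun _ => Set.Icc (0 : ℝ) 1) :=
    hK.inter (convex_pi fun _ _ => convex_Icc 0 1)
  obtain ⟨hyK, hy⟩ := hcube.sum_mem (fun x _ => div_nonneg (cubeWeight_nonneg hp x) hm.le)
    (by rw [← sum_div, div_self hm.ne']) fun x hx => ⟨hA x hx, fun i _ => by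
      unfold cubeEmbed; split_ifs <;> simp⟩
  exact (sum_cubeWeight_le_exp_neg_IpVec hp hm).trans
    (exp_le_exp.2 (neg_le_neg (hc _ hyK fun i => hy i (Set.mem_univ i))))

open Classical in
theorem upper_tail_of_convex_covering_general {d : ℕ} (h : (Fin d → ℝ) → ℝ)
    {I : Type*} [Fintype I] (B : I → Set (Fin d → ℝ))
    (hBconvex : ∀ i, Convex ℝ (B i))
    (E : Finset (Fin d → Bool)) (δ : ℝ)
    (hcover : ∀ x : Fin d → Bool, x ∉ E → ∃ i, cubeEmbed x ∈ B i)
    (hfluct : ∀ i, ∀ x ∈ B i, ∀ y ∈ B i, h y - h x ≤ δ)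
    (p : ℝ) (hp : p ∈ Set.Icc (0:ℝ) 1) (t : ℝ) :
    ∑ x ∈ Finset.univ.filter (fun x : Fin d → Bool => t ≤ h (cubeEmbed x)),
        cubeWeight p x ≤
      (Fintype.card I : ℝ) *
        Real.exp (-(sInf {r : ℝ | ∃ y : Fin d → ℝ,
          (∀ i, y i ∈ Set.Icc (0:ℝ) 1) ∧ t - δ ≤ h y ∧ r = IpVec p y}))
      + ∑ x ∈ E, cubeWeight p x := by
  set S := {r : ℝ | ∃ y : Fin d → ℝ, (∀ i, y i ∈ Set.Icc (0:ℝ) 1) ∧ t - δ ≤ h y ∧ r = IpVec p y}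
  set F := univ.filter fun x : Fin d → Bool => t ≤ h (cubeEmbed x)
  set A : I → Finset (Fin d → Bool) := fun i => F.filter fun x => cubeEmbed x ∈ B i
  have hw := cubeWeight_nonneg (d := d) hp
  have hS : BddBelow S := ⟨-d, by rintro r ⟨y, hy, -, rfl⟩; exact neg_le_IpVec hp hy⟩
  have hA : ∀ i, ∑ x ∈ A i, cubeWeight p x ≤ exp (-sInf S) := by
    intro i
    rcases (A i).eq_empty_or_nonempty with hempty | ⟨x₀, hx₀⟩
    · simp [hempty, (exp_pos _).le]
    obtain ⟨hx₀F, hx₀B⟩ := mem_filter.1 hx₀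
    refine sum_cubeWeight_le_exp_neg_of_convex hp (hBconvex i) (fun x hx => (mem_filter.1 hx).2)
      fun y hy hy01 => csInf_le hS ⟨y, hy01, ?_, rfl⟩
    linarith [hfluct i y hy _ hx₀B, (mem_filter.1 hx₀F).2]
  have hcovered : F.filter (· ∉ E) ⊆ (univ.sigma A).image Sigma.snd := by
    intro x hx
    obtain ⟨hxF, hxE⟩ := mem_filter.1 hx
    obtain ⟨i, hi⟩ := hcover x hxE
    exact mem_image.2 ⟨⟨i, x⟩, mem_sigma.2 ⟨mem_univ i, mem_filter.2 ⟨hxF, hi⟩⟩, rfl⟩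
  calc ∑ x ∈ F, cubeWeight p x
      = ∑ x ∈ F.filter (· ∈ E), cubeWeight p x + ∑ x ∈ F.filter (· ∉ E), cubeWeight p x :=
        (sum_filter_add_sum_filter_not F _ _).symm
    _ ≤ ∑ x ∈ E, cubeWeight p x + ∑ x ∈ (univ.sigma A).image Sigma.snd, cubeWeight p x :=
        add_le_add
          (sum_le_sum_of_subset_of_nonneg (fun x hx => (mem_filter.1 hx).2) fun x _ _ => hw x)
          (sum_le_sum_of_subset_of_nonneg hcovered fun x _ _ => hw x)
    _ ≤ ∑ x ∈ E, cubeWeight p x + ∑ i, ∑ x ∈ A i, cubeWeight p x := by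
        grw [sum_image_le_of_nonneg fun x _ => hw x, sum_sigma]
    _ ≤ ∑ x ∈ E, cubeWeight p x + ∑ _i : I, exp (-sInf S) := by
        grw [sum_le_sum fun i _ => hA i]
    _ = _ := by rw [sum_const, card_univ, nsmul_eq_mul, add_comm]

open Classical in
/-- covering the cube minus an exceptional set by closed convex sets on
which `h` fluctuates by at most `δ` yields the upper-tail bound
`μ_p(h ≥ t) ≤ |I| exp(−φ_{h,p}(t−δ)) + μ_p(E)`. -/
theorem upper_tail_of_convex_covering {d : ℕ} (h : (Fin d → ℝ) → ℝ)
    {I : Type*} [Fintype I] (B : I → Set (Fin d → ℝ))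
    (hBclosed : ∀ i, IsClosed (B i)) (hBconvex : ∀ i, Convex ℝ (B i))
    (E : Finset (Fin d → Bool)) (δ : ℝ) (hδ : 0 < δ)
    (hcover : ∀ x : Fin d → Bool, x ∉ E → ∃ i, cubeEmbed x ∈ B i)
    (hfluct : ∀ i, ∀ x ∈ B i, ∀ y ∈ B i, h y - h x ≤ δ)
    (p : ℝ) (hp : p ∈ Set.Icc (0:ℝ) 1) (t : ℝ) :
    ∑ x ∈ Finset.univ.filter (fun x : Fin d → Bool => t ≤ h (cubeEmbed x)),
        cubeWeight p x ≤
      (Fintype.card I : ℝ) *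
        Real.exp (-(sInf {r : ℝ | ∃ y : Fin d → ℝ,
          (∀ i, y i ∈ Set.Icc (0:ℝ) 1) ∧ t - δ ≤ h y ∧ r = IpVec p y}))
      + ∑ x ∈ E, cubeWeight p x :=
  upper_tail_of_convex_covering_general h B hBconvex E δ hcover hfluct p hp t
end

section
/- For any two N×N real symmetric matrices M_1, M_2 and any positive integer ℓ, |Tr(M_1^ℓ) − Tr(M_2^ℓ)| ≤ ℓ · ‖M_1 − M_2‖_op · (‖M_1‖_{S_{ℓ−1}}^{ℓ−1} + ‖M_2‖_{S_{ℓ−1}}^{ℓ−1}), where ‖X‖_{S_α} = (Σ_j |λ_j(X)|^α)^{1/α} is the Schatten α-norm and ‖·‖_op is the operator norm. -/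
/-!
Diagonalising, `Tr M^ℓ = ∑ⱼ λⱼ^ℓ`. Pair the eigenvalues of `M₁` and `M₂` in decreasing order:
by Weyl's inequality `|λⱼ(M₁) - λⱼ(M₂)| ≤ ‖M₁ - M₂‖`, so the claim follows termwise from
`|a^ℓ - b^ℓ| ≤ ℓ |a - b| (|a|^(ℓ-1) + |b|^(ℓ-1))`.

Weyl's inequality is a dimension count: the span of the eigenvectors of `T` for `λ₀ ≥ ⋯ ≥ λᵢ`
and that of the eigenvectors of `S` for `μᵢ ≥ ⋯ ≥ μₙ₋₁` have dimensions summing to `n + 1`, so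
they share a vector `x ≠ 0`, and then
`λᵢ ‖x‖² ≤ re ⟪T x, x⟫ ≤ re ⟪S x, x⟫ + ‖T - S‖ ‖x‖² ≤ (μᵢ + ‖T - S‖) ‖x‖²`.
-/

/-- The ℓ²→ℓ² operator norm of a real N×N matrix. -/
noncomputable def opNorm {N : ℕ} (M : Matrix (Fin N) (Fin N) ℝ) : ℝ :=
  ‖(Matrix.toEuclideanCLM (𝕜 := ℝ) M : EuclideanSpace ℝ (Fin N) →L[ℝ] EuclideanSpace ℝ (Fin N))‖

open Module Submodule RCLike

theorem abs_pow_sub_pow_le_mul_add {α : Type*} [CommRing α] [LinearOrder α] [IsOrderedRing α]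
    (a b : α) (n : ℕ) :
    |a ^ n - b ^ n| ≤ n * |a - b| * (|a| ^ (n - 1) + |b| ^ (n - 1)) := by
  have hmax : max |a| |b| ^ (n - 1) ≤ |a| ^ (n - 1) + |b| ^ (n - 1) := by
    rcases max_choice |a| |b| with h | h <;> rw [h]
    · exact le_add_of_nonneg_right (by positivity)
    · exact le_add_of_nonneg_left (by positivity)
  calc |a ^ n - b ^ n| ≤ |a - b| * n * max |a| |b| ^ (n - 1) := abs_pow_sub_pow_le a b n
    _ = n * |a - b| * max |a| |b| ^ (n - 1) := by ring
    _ ≤ n * |a - b| * (|a| ^ (n - 1) + |b| ^ (n - 1)) := by gcongr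

theorem abs_sum_pow_sub_sum_pow_le {α ι : Type*} [CommRing α] [LinearOrder α]
    [IsOrderedRing α] (s : Finset ι) (f g : ι → α) {δ : α} (hfg : ∀ i ∈ s, |f i - g i| ≤ δ)
    (n : ℕ) :
    |∑ i ∈ s, f i ^ n - ∑ i ∈ s, g i ^ n| ≤
      n * δ * (∑ i ∈ s, |f i| ^ (n - 1) + ∑ i ∈ s, |g i| ^ (n - 1)) := by
  rw [← Finset.sum_sub_distrib, ← Finset.sum_add_distrib, Finset.mul_sum]
  refine (Finset.abs_sum_le_sum_abs _ _).trans (Finset.sum_le_sum fun i hi => ?_)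
  refine (abs_pow_sub_pow_le_mul_add _ _ n).trans ?_
  gcongr
  exact hfg i hi

namespace OrthonormalBasis

variable {ι 𝕜 E : Type*} [Fintype ι] [RCLike 𝕜] [NormedAddCommGroup E] [InnerProductSpace 𝕜 E]
  (b : OrthonormalBasis ι 𝕜 E)

theorem repr_eq_zero_of_mem_span_image {s : Set ι} {x : E}
    (hx : x ∈ span 𝕜 (b '' s)) {i : ι} (hi : i ∉ s) : b.repr x i = 0 := by
  rw [← b.coe_toBasis, Basis.mem_span_image] at hx
  simpa using Finsupp.notMem_support_iff.mp fun h => hi (hx h)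

theorem finrank_span_image (s : Finset ι) :
    finrank 𝕜 (span 𝕜 (b '' s)) = s.card := by
  classical
  have hb := b.orthonormal.linearIndependent
  rw [← Finset.coe_image,
    finrank_span_finset_eq_card (by simpa using (hb.linearIndepOn _).id_image),
    Finset.card_image_of_injective _ hb.injective]

end OrthonormalBasis

namespace LinearMap.IsSymmetric

variable {𝕜 E : Type*} [RCLike 𝕜] [NormedAddCommGroup E] [InnerProductSpace 𝕜 E]
  [FiniteDimensional 𝕜 E] {n : ℕ} {T : E →ₗ[𝕜] E}

theorem re_inner_apply_self_eq_sum (hT : T.IsSymmetric) (hn : finrank 𝕜 E = n) (x : E) :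
    re (inner 𝕜 (T x) x) =
      ∑ i, hT.eigenvalues hn i * ‖(hT.eigenvectorBasis hn).repr x i‖ ^ 2 := by
  rw [← (hT.eigenvectorBasis hn).repr.inner_map_map, PiLp.inner_apply, map_sum]
  refine Finset.sum_congr rfl fun i _ => ?_
  rw [eigenvectorBasis_apply_self_apply, RCLike.inner_apply, map_mul (starRingEnd 𝕜), conj_ofReal,
    mul_left_comm, mul_conj, ← ofReal_pow, ← ofReal_mul, ofReal_re]

theorem norm_sq_eq_sum (hT : T.IsSymmetric) (hn : finrank 𝕜 E = n) (x : E) :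
    ‖x‖ ^ 2 = ∑ i, ‖(hT.eigenvectorBasis hn).repr x i‖ ^ 2 := by
  rw [← (hT.eigenvectorBasis hn).repr.norm_map, EuclideanSpace.norm_sq_eq]

theorem le_re_inner_apply_self_of_mem_span (hT : T.IsSymmetric) (hn : finrank 𝕜 E = n)
    {s : Set (Fin n)} {c : ℝ} (hc : ∀ i ∈ s, c ≤ hT.eigenvalues hn i) {x : E}
    (hx : x ∈ span 𝕜 (hT.eigenvectorBasis hn '' s)) :
    c * ‖x‖ ^ 2 ≤ re (inner 𝕜 (T x) x) := by
  rw [hT.norm_sq_eq_sum hn, hT.re_inner_apply_self_eq_sum hn, Finset.mul_sum]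
  refine Finset.sum_le_sum fun i _ => ?_
  by_cases hi : i ∈ s
  · exact mul_le_mul_of_nonneg_right (hc i hi) (sq_nonneg _)
  · simp [(hT.eigenvectorBasis hn).repr_eq_zero_of_mem_span_image hx hi]

theorem re_inner_apply_self_le_of_mem_span (hT : T.IsSymmetric) (hn : finrank 𝕜 E = n)
    {s : Set (Fin n)} {c : ℝ} (hc : ∀ i ∈ s, hT.eigenvalues hn i ≤ c) {x : E}
    (hx : x ∈ span 𝕜 (hT.eigenvectorBasis hn '' s)) :
    re (inner 𝕜 (T x) x) ≤ c * ‖x‖ ^ 2 := by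
  rw [hT.norm_sq_eq_sum hn, hT.re_inner_apply_self_eq_sum hn, Finset.mul_sum]
  refine Finset.sum_le_sum fun i _ => ?_
  by_cases hi : i ∈ s
  · exact mul_le_mul_of_nonneg_right (hc i hi) (sq_nonneg _)
  · simp [(hT.eigenvectorBasis hn).repr_eq_zero_of_mem_span_image hx hi]

end LinearMap.IsSymmetric

namespace ContinuousLinearMap

variable {𝕜 E : Type*} [RCLike 𝕜] [NormedAddCommGroup E] [InnerProductSpace 𝕜 E]
  [FiniteDimensional 𝕜 E] {n : ℕ} {T S : E →L[𝕜] E}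

theorem eigenvalues_le_eigenvalues_add_norm_sub (hT : (T : E →ₗ[𝕜] E).IsSymmetric)
    (hS : (S : E →ₗ[𝕜] E).IsSymmetric) (hn : finrank 𝕜 E = n) (i : Fin n) :
    hT.eigenvalues hn i ≤ hS.eigenvalues hn i + ‖T - S‖ := by
  set V := span 𝕜 (hT.eigenvectorBasis hn '' ↑(Finset.Iic i))
  set W := span 𝕜 (hS.eigenvectorBasis hn '' ↑(Finset.Ici i))
  have hVW : ¬Disjoint V W := by
    intro h
    have := Submodule.finrank_add_finrank_le_of_disjoint h
    rw [(hT.eigenvectorBasis hn).finrank_span_image,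
      (hS.eigenvectorBasis hn).finrank_span_image, Fin.card_Iic, Fin.card_Ici, hn] at this
    omega
  obtain ⟨x, hxV, hxW, hx⟩ : ∃ x ∈ V, x ∈ W ∧ x ≠ 0 := by
    simpa [Submodule.disjoint_def] using hVW
  have hlow := hT.le_re_inner_apply_self_of_mem_span hn
    (fun k hk => hT.eigenvalues_antitone hn (Finset.mem_Iic.mp hk)) hxV
  have hup := hS.re_inner_apply_self_le_of_mem_span hn
    (fun k hk => hS.eigenvalues_antitone hn (Finset.mem_Ici.mp hk)) hxW
  have hdiff : re (inner 𝕜 ((T - S) x) x) ≤ ‖T - S‖ * ‖x‖ ^ 2 :=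
    calc re (inner 𝕜 ((T - S) x) x) ≤ ‖(T - S) x‖ * ‖x‖ := re_inner_le_norm _ _
      _ ≤ ‖T - S‖ * ‖x‖ * ‖x‖ := by gcongr; exact le_opNorm _ _
      _ = ‖T - S‖ * ‖x‖ ^ 2 := by ring
  have hsplit : re (inner 𝕜 (T x) x) = re (inner 𝕜 (S x) x) + re (inner 𝕜 ((T - S) x) x) := by
    simp [inner_sub_left]
  rw [coe_coe] at hlow hup
  have hx2 : 0 < ‖x‖ ^ 2 := by positivity
  exact le_of_mul_le_mul_right (by linarith) hx2

theorem abs_eigenvalues_sub_le_norm_sub (hT : (T : E →ₗ[𝕜] E).IsSymmetric)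
    (hS : (S : E →ₗ[𝕜] E).IsSymmetric) (hn : finrank 𝕜 E = n) (i : Fin n) :
    |hT.eigenvalues hn i - hS.eigenvalues hn i| ≤ ‖T - S‖ := by
  have hTS := eigenvalues_le_eigenvalues_add_norm_sub hT hS hn i
  have hST := eigenvalues_le_eigenvalues_add_norm_sub hS hT hn i
  rw [norm_sub_rev] at hST
  exact abs_sub_le_iff.mpr ⟨by linarith, by linarith⟩

end ContinuousLinearMap

namespace Matrix.IsHermitian

variable {𝕜 n : Type*} [RCLike 𝕜] [Fintype n] [DecidableEq n] {A B : Matrix n n 𝕜}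

theorem trace_pow_eq_sum_eigenvalues_pow (hA : A.IsHermitian) (ℓ : ℕ) :
    (A ^ ℓ).trace = ∑ i, (hA.eigenvalues i : 𝕜) ^ ℓ := by
  conv_lhs => rw [hA.spectral_theorem]
  rw [← map_pow, Unitary.conjStarAlgAut_apply, trace_mul_cycle,
    Unitary.coe_star_mul_self, one_mul, diagonal_pow, trace_diagonal]
  simp

/-- `eigenvalues` is the decreasingly sorted `eigenvalues₀` transported along an arbitrary
bijection `Fin (card n) ≃ n`, so only `eigenvalues₀` can be paired index by index. -/
theorem sum_comp_eigenvalues {M : Type*} [AddCommMonoid M] (hA : A.IsHermitian) (f : ℝ → M) :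
    ∑ i, f (hA.eigenvalues i) = ∑ k, f (hA.eigenvalues₀ k) :=
  Equiv.sum_comp (Fintype.equivOfCardEq (Fintype.card_fin _)).symm (f ∘ hA.eigenvalues₀)

theorem abs_eigenvalues₀_sub_le (hA : A.IsHermitian) (hB : B.IsHermitian)
    (k : Fin (Fintype.card n)) :
    |hA.eigenvalues₀ k - hB.eigenvalues₀ k| ≤ ‖toEuclideanCLM (𝕜 := 𝕜) (A - B)‖ := by
  have hA' : (toEuclideanCLM (𝕜 := 𝕜) A : EuclideanSpace 𝕜 n →ₗ[𝕜] _).IsSymmetric :=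
    isSymmetric_toEuclideanLin_iff.mpr hA
  have hB' : (toEuclideanCLM (𝕜 := 𝕜) B : EuclideanSpace 𝕜 n →ₗ[𝕜] _).IsSymmetric :=
    isSymmetric_toEuclideanLin_iff.mpr hB
  rw [map_sub]
  exact ContinuousLinearMap.abs_eigenvalues_sub_le_norm_sub hA' hB' finrank_euclideanSpace k

end Matrix.IsHermitian

theorem trace_pow_diff_le_general {N : ℕ} (M₁ M₂ : Matrix (Fin N) (Fin N) ℝ)
    (h₁ : M₁.IsHermitian) (h₂ : M₂.IsHermitian) (ℓ : ℕ) :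
    |Matrix.trace (M₁ ^ ℓ) - Matrix.trace (M₂ ^ ℓ)| ≤
      (ℓ : ℝ) * opNorm (M₁ - M₂) *
        ((∑ j, |h₁.eigenvalues j| ^ (ℓ - 1)) + ∑ j, |h₂.eigenvalues j| ^ (ℓ - 1)) := by
  have hweyl (k) (_ : k ∈ Finset.univ) :
      |h₁.eigenvalues₀ k - h₂.eigenvalues₀ k| ≤ opNorm (M₁ - M₂) :=
    h₁.abs_eigenvalues₀_sub_le h₂ k
  rw [h₁.trace_pow_eq_sum_eigenvalues_pow, h₂.trace_pow_eq_sum_eigenvalues_pow]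
  simp only [RCLike.ofReal_real_eq_id, id]
  rw [h₁.sum_comp_eigenvalues (· ^ ℓ), h₂.sum_comp_eigenvalues (· ^ ℓ),
    h₁.sum_comp_eigenvalues (|·| ^ (ℓ - 1)), h₂.sum_comp_eigenvalues (|·| ^ (ℓ - 1))]
  exact abs_sum_pow_sub_sum_pow_le _ _ _ hweyl ℓ

/-- for symmetric matrices `M₁, M₂` and a positive integer `ℓ`,
`|Tr M₁^ℓ − Tr M₂^ℓ| ≤ ℓ‖M₁−M₂‖_op (‖M₁‖_{S_{ℓ−1}}^{ℓ−1} + ‖M₂‖_{S_{ℓ−1}}^{ℓ−1})`,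
where `‖M‖_{S_α}^α = Σ_j |λ_j(M)|^α`. -/
theorem trace_pow_diff_le {N : ℕ} (M₁ M₂ : Matrix (Fin N) (Fin N) ℝ)
    (h₁ : M₁.IsHermitian) (h₂ : M₂.IsHermitian) (ℓ : ℕ) (hℓ : 1 ≤ ℓ) :
    |Matrix.trace (M₁ ^ ℓ) - Matrix.trace (M₂ ^ ℓ)| ≤
      (ℓ : ℝ) * opNorm (M₁ - M₂) *
        ((∑ j, |h₁.eigenvalues j| ^ (ℓ - 1)) + ∑ j, |h₂.eigenvalues j| ^ (ℓ - 1)) :=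
  trace_pow_diff_le_general M₁ M₂ h₁ h₂ ℓ
end

section
/- For 0 < q < p < 1, α ∈ [2,∞], and N ∈ ℕ, the infimum of I_p(X) over all symmetric N×N matrices X with entries in [0,1], zero diagonal, and Schatten norm ‖X‖_{S_α} ≤ (N−1)q, is at least (N choose 2)·I_p(q), where I_p(q) = q log(q/p) + (1−q) log((1−q)/(1−p)). -/
open scoped ENNReal
/-- `I_p(X) = Σ_{i<j} I_p(X_{ij})`. -/
noncomputable def IpMat {N : ℕ} (p : ℝ) (X : Matrix (Fin N) (Fin N) ℝ) : ℝ :=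
  ∑ q ∈ Finset.univ.filter (fun q : Fin N × Fin N => q.1 < q.2), Ip p (X q.1 q.2)

/-- Schatten norm of index `α ∈ [1,∞]` of a symmetric real matrix:
`(Σ_j |λ_j|^α)^{1/α}`, and the operator norm for `α = ∞`. -/
noncomputable def schattenNorm {N : ℕ} (α : ℝ≥0∞) (X : Matrix (Fin N) (Fin N) ℝ)
    (hX : X.IsHermitian) : ℝ :=
  if α = ⊤ then opNorm X
  else (∑ j, |hX.eigenvalues j| ^ α.toReal) ^ ((1 : ℝ) / α.toReal)

/-!
With `S` the sum of the entries above the diagonal, `2S = 𝟙ᵀX𝟙 ≤ N‖X‖_op`, and `‖X‖_op`, the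
largest `|λ_j|`, is at most `‖X‖_{S_α}`; so the average entry is at most `q`. The tangent line
of `I_p` at `q` has slope `log (q/p) - log ((1-q)/(1-p)) ≤ 0` and lies below `I_p` on `[0, 1]`,
so summing it over the `N choose 2` pairs gives the bound.
-/

open Finset Matrix Real

section SymmetricSum

variable {ι M : Type*} [Fintype ι] [LinearOrder ι] [AddCommMonoid M]

theorem sum_prod_eq_two_nsmul_sum_lt_add_sum_diag (f : ι → ι → M) (hf : ∀ i j, f i j = f j i) :
    ∑ e : ι × ι, f e.1 e.2 =
      2 • ∑ e ∈ univ.filter (fun e : ι × ι => e.1 < e.2), f e.1 e.2 + ∑ i, f i i := by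
  have hsplit : ∀ e : ι × ι, f e.1 e.2 = (if e.1 < e.2 then f e.1 e.2 else 0) +
      (if e.2 < e.1 then f e.1 e.2 else 0) + (if e.1 = e.2 then f e.1 e.2 else 0) := by
    rintro ⟨i, j⟩
    rcases lt_trichotomy i j with h | rfl | h
    · simp [h, h.ne, h.not_gt]
    · simp
    · simp [h, h.ne', h.not_gt]
  have hswap : ∑ e : ι × ι, (if e.2 < e.1 then f e.1 e.2 else 0) =
      ∑ e : ι × ι, (if e.1 < e.2 then f e.1 e.2 else 0) :=
    Fintype.sum_equiv (Equiv.prodComm ι ι) _ _ fun e => by rw [hf]; rfl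
  have hdiag : ∑ e : ι × ι, (if e.1 = e.2 then f e.1 e.2 else 0) = ∑ i, f i i := by
    simp only [Fintype.sum_prod_type, sum_ite_eq, mem_univ, if_true]
  rw [Fintype.sum_congr _ _ hsplit, sum_add_distrib, sum_add_distrib, hswap, hdiag, two_nsmul,
    sum_filter]

theorem card_filter_lt_eq_choose_two :
    #(univ.filter fun e : ι × ι => e.1 < e.2) = (Fintype.card ι).choose 2 := by
  have h := sum_prod_eq_two_nsmul_sum_lt_add_sum_diag (M := ℕ) (ι := ι) (fun _ _ => 1)
    fun _ _ => rfl
  simp only [sum_const, card_univ, Fintype.card_prod, smul_eq_mul, mul_one] at h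
  rw [Nat.choose_two_right, Nat.mul_sub_one]
  omega

end SymmetricSum

section Spectral

variable {N : ℕ} {X : Matrix (Fin N) (Fin N) ℝ}

theorem dotProduct_mulVec_le_opNorm (X : Matrix (Fin N) (Fin N) ℝ) (v : Fin N → ℝ) :
    v ⬝ᵥ X *ᵥ v ≤ opNorm X * (v ⬝ᵥ v) := by
  set u := WithLp.toLp 2 v
  calc v ⬝ᵥ X *ᵥ v = inner ℝ u (toEuclideanCLM (𝕜 := ℝ) X u) := (inner_toEuclideanCLM X u u).symm
    _ ≤ ‖u‖ * ‖toEuclideanCLM (𝕜 := ℝ) X u‖ := real_inner_le_norm _ _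
    _ ≤ ‖u‖ * (opNorm X * ‖u‖) := by gcongr; exact ContinuousLinearMap.le_opNorm _ _
    _ = opNorm X * (v ⬝ᵥ v) := by
      rw [mul_left_comm, ← sq, ← real_inner_self_eq_norm_sq,
        EuclideanSpace.inner_eq_star_dotProduct]
      simp [u]

/-- For self-adjoint `T`, `‖T‖` is the spectral radius. -/
theorem opNorm_le_of_forall_abs_eigenvalues_le (hX : X.IsHermitian) {M : ℝ}
    (hM : ∀ j, |hX.eigenvalues j| ≤ M) (hM0 : 0 ≤ M) : opNorm X ≤ M := by
  set T : EuclideanSpace ℝ (Fin N) →L[ℝ] EuclideanSpace ℝ (Fin N) := toEuclideanCLM (𝕜 := ℝ) X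
  have hspec : (‖T‖₊ : ℝ≥0∞) ≤ ENNReal.ofReal M := by
    rw [← T.spectralRadius_eq_nnnorm (hX.isSelfAdjoint.map _), spectralRadius,
      AlgEquiv.spectrum_eq, hX.spectrum_real_eq_range_eigenvalues]
    refine iSup₂_le ?_
    rintro _ ⟨j, rfl⟩
    rw [ENNReal.le_ofReal_iff_toReal_le ENNReal.coe_ne_top hM0]
    simpa using hM j
  rw [ENNReal.le_ofReal_iff_toReal_le ENNReal.coe_ne_top hM0] at hspec
  simpa [opNorm] using hspec

theorem opNorm_le_schattenNorm {α : ℝ≥0∞} (hα : α ≠ 0) (hX : X.IsHermitian) :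
    opNorm X ≤ schattenNorm α X hX := by
  unfold schattenNorm
  split_ifs with htop
  · exact le_rfl
  have hr : 0 < α.toReal := ENNReal.toReal_pos hα htop
  refine opNorm_le_of_forall_abs_eigenvalues_le hX (fun j => ?_) (by positivity)
  calc |hX.eigenvalues j| = (|hX.eigenvalues j| ^ α.toReal) ^ (1 / α.toReal) := by
        rw [← rpow_mul (abs_nonneg _), mul_one_div_cancel hr.ne', rpow_one]
    _ ≤ (∑ i, |hX.eigenvalues i| ^ α.toReal) ^ (1 / α.toReal) := by
        gcongr
        exact single_le_sum (f := fun i => |hX.eigenvalues i| ^ α.toReal)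
          (fun i _ => by positivity) (mem_univ j)

theorem sum_upper_entries_le_of_schattenNorm_le {α : ℝ≥0∞} (hα : α ≠ 0) (hX : X.IsHermitian)
    (hdiag : ∀ i, X i i = 0) {q : ℝ} (hnorm : schattenNorm α X hX ≤ ((N : ℝ) - 1) * q) :
    ∑ e ∈ univ.filter (fun e : Fin N × Fin N => e.1 < e.2), X e.1 e.2 ≤ N.choose 2 * q := by
  have hsym : ∀ i j, X i j = X j i := fun i j => by simpa using hX.apply j i
  have hquad : (1 : Fin N → ℝ) ⬝ᵥ X *ᵥ 1 =
      2 * ∑ e ∈ univ.filter (fun e : Fin N × Fin N => e.1 < e.2), X e.1 e.2 := by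
    have h := sum_prod_eq_two_nsmul_sum_lt_add_sum_diag X hsym
    simp only [hdiag, sum_const_zero, add_zero, nsmul_eq_mul, Nat.cast_ofNat] at h
    rw [← h, Fintype.sum_prod_type]
    simp [dotProduct, mulVec]
  have hones : (1 : Fin N → ℝ) ⬝ᵥ 1 = N := by simp [dotProduct]
  have hbound := (dotProduct_mulVec_le_opNorm X 1).trans
    (mul_le_mul_of_nonneg_right ((opNorm_le_schattenNorm hα hX).trans hnorm) (by simp [hones]))
  rw [hquad, hones] at hbound
  rw [Nat.cast_choose_two]
  linarith

end Spectral

section RelativeEntropy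

theorem sub_le_mul_log_div {a b : ℝ} (ha : 0 ≤ a) (hb : 0 < b) : a - b ≤ a * log (a / b) := by
  have h := self_sub_one_le_mul_log (div_nonneg ha hb.le)
  calc a - b = b * (a / b - 1) := by field_simp
    _ ≤ b * (a / b * log (a / b)) := by gcongr
    _ = a * log (a / b) := by field_simp

theorem mul_log_div_eq_add (a : ℝ) {b c : ℝ} (hb : b ≠ 0) (hc : c ≠ 0) :
    a * log (a / b) = a * log (a / c) + a * log (c / b) := by
  rcases eq_or_ne a 0 with rfl | ha
  · simp
  rw [← mul_add, ← log_mul (div_ne_zero ha hc) (div_ne_zero hc hb), div_mul_div_cancel₀ hc]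

theorem Ip_nonneg {q x : ℝ} (hq0 : 0 < q) (hq1 : q < 1) (hx0 : 0 ≤ x) (hx1 : x ≤ 1) :
    0 ≤ Ip q x := by
  have h := sub_le_mul_log_div hx0 hq0
  have h' := sub_le_mul_log_div (sub_nonneg.2 hx1) (sub_pos.2 hq1)
  unfold Ip
  linarith

theorem Ip_eq_Ip_add {p q : ℝ} (hp0 : p ≠ 0) (hp1 : p ≠ 1) (hq0 : q ≠ 0) (hq1 : q ≠ 1) (x : ℝ) :
    Ip p x = Ip q x + x * log (q / p) + (1 - x) * log ((1 - q) / (1 - p)) := by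
  have h := mul_log_div_eq_add x hp0 hq0
  have h' := mul_log_div_eq_add (1 - x) (sub_ne_zero.2 hp1.symm) (sub_ne_zero.2 hq1.symm)
  unfold Ip
  linarith

/-- The gap between `Ip p` and its tangent line at `q` is exactly `Ip q x ≥ 0`. -/
theorem Ip_add_sub_mul_le {p q x : ℝ} (hp0 : 0 < p) (hp1 : p < 1) (hq0 : 0 < q) (hq1 : q < 1)
    (hx0 : 0 ≤ x) (hx1 : x ≤ 1) :
    Ip p q + (x - q) * (log (q / p) - log ((1 - q) / (1 - p))) ≤ Ip p x := by
  rw [Ip_eq_Ip_add hp0.ne' hp1.ne hq0.ne' hq1.ne x]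
  have hgap := Ip_nonneg hq0 hq1 hx0 hx1
  have hpq : Ip p q = q * log (q / p) + (1 - q) * log ((1 - q) / (1 - p)) := rfl
  linarith

theorem card_mul_Ip_le_sum {ι : Type*} (s : Finset ι) (x : ι → ℝ) {p q : ℝ} (hq0 : 0 < q)
    (hqp : q ≤ p) (hp1 : p < 1) (hx : ∀ e ∈ s, x e ∈ Set.Icc (0 : ℝ) 1)
    (hsum : ∑ e ∈ s, x e ≤ #s * q) : #s * Ip p q ≤ ∑ e ∈ s, Ip p (x e) := by
  have hp0 : 0 < p := hq0.trans_le hqp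
  have hq1 : q < 1 := hqp.trans_lt hp1
  set slope := log (q / p) - log ((1 - q) / (1 - p))
  have hslope : slope ≤ 0 := by
    have h1 : log (q / p) ≤ 0 := log_nonpos (by positivity) ((div_le_one hp0).2 hqp)
    have h2 : 0 ≤ log ((1 - q) / (1 - p)) :=
      log_nonneg ((one_le_div (sub_pos.2 hp1)).2 (by linarith))
    linarith
  calc #s * Ip p q ≤ #s * Ip p q + (∑ e ∈ s, x e - #s * q) * slope :=
        le_add_of_nonneg_right (mul_nonneg_of_nonpos_of_nonpos (by linarith) hslope)
    _ = ∑ e ∈ s, (Ip p q + (x e - q) * slope) := by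
        rw [sum_add_distrib, ← sum_mul, sum_sub_distrib]
        simp
    _ ≤ ∑ e ∈ s, Ip p (x e) :=
        sum_le_sum fun e he => Ip_add_sub_mul_le hp0 hp1 hq0 hq1 (hx e he).1 (hx e he).2

end RelativeEntropy

/-- for `0 < q < p < 1`, `α ∈ [2,∞]` and any symmetric N×N matrix `X`
with entries in `[0,1]`, zero diagonal, and `‖X‖_{S_α} ≤ (N−1)q`, one has
`I_p(X) ≥ (N choose 2)·I_p(q)`; i.e. the infimum of `I_p` over this sub-level set is
at least `(N choose 2)·I_p(q)`. -/
theorem lower_tail_schatten_variational {N : ℕ} (p q : ℝ)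
    (hq0 : 0 < q) (hqp : q < p) (hp1 : p < 1) (α : ℝ≥0∞) (hα : 2 ≤ α)
    (X : Matrix (Fin N) (Fin N) ℝ) (hX : X.IsHermitian)
    (hX01 : ∀ i j, X i j ∈ Set.Icc (0:ℝ) 1) (hdiag : ∀ i, X i i = 0)
    (hnorm : schattenNorm α X hX ≤ ((N : ℝ) - 1) * q) :
    (N.choose 2 : ℝ) * Ip p q ≤ IpMat p X := by
  have hα0 : α ≠ 0 := (zero_lt_two.trans_le hα).ne'
  have hpairs : #(univ.filter fun e : Fin N × Fin N => e.1 < e.2) = N.choose 2 := by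
    simpa using card_filter_lt_eq_choose_two (ι := Fin N)
  have hsum := sum_upper_entries_le_of_schattenNorm_le hα0 hX hdiag hnorm
  rw [← hpairs] at hsum ⊢
  exact card_mul_Ip_le_sum _ _ hq0 hqp.le hp1 (fun e _ => hX01 e.1 e.2) hsum
end

section
/- Let H = ([n], E) be a simple graph and for an edge e = {v,w} ∈ E let H_{(e)} denote the induced subgraph of H on V \ {v,w}. For symmetric N×N matrices W with entries in [0,1] and Z symmetric, the directional derivative D_H(W,Z) = ⟨Z, ∇hom_H(W)⟩ satisfies |D_H(W,Z)| ≤ N·‖Z‖_op·Σ_{e ∈ E} hom_{H_{(e)}}(W), where hom_H(X) = Σ_{φ: [n]→[N]} Π_{kl ∈ E} X_{φ(k)φ(l)}. -/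
/-- Homomorphism counting function of the induced subgraph `H[s]` of a graph
`H` on `[n]`, evaluated at an N×N matrix `X`:
`hom_{H[s]}(X) = Σ_{φ : s → [N]} Π_{kl ∈ E(H[s])} X_{φ(k)φ(l)}`. -/
noncomputable def homOn {n N : ℕ} (H : SimpleGraph (Fin n)) [DecidableRel H.Adj]
    (s : Finset (Fin n)) (X : Matrix (Fin N) (Fin N) ℝ) : ℝ :=
  ∑ φ : {x // x ∈ s} → Fin N,
    ∏ q ∈ Finset.univ.filter
        (fun q : {x // x ∈ s} × {x // x ∈ s} =>
          (q.1 : Fin n) < (q.2 : Fin n) ∧ H.Adj q.1 q.2),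
      X (φ q.1) (φ q.2)

/-!
Differentiating the multilinear polynomial `hom_H` along `Z` leaves one term per edge `(u, v)`:
the sum over `φ` of `Z (φ u) (φ v)` times the product of `W` over the other edges. Fix the
restriction `ψ` of `φ` to the other vertices. Since no other edge joins `u` and `v`, that product
factors as `a (φ u) * b (φ v)` with `b ∈ [0, 1]` and `0 ≤ a ≤ w ψ`, the weight of `ψ` in
`hom_{H_(e)}(W)` (dropping factors in `[0, 1]`). The sum over `(φ u, φ v)` is the bilinear form
`a ⬝ᵥ Z *ᵥ b`, bounded by `‖Z‖_op ‖a‖₂ ‖b‖₂ ≤ N ‖Z‖_op w ψ`; summing over `ψ` gives the claim.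
-/

open Finset Matrix

theorem norm_toLp_le_sqrt_card_mul {ι : Type*} [Fintype ι] {a : ι → ℝ} {α : ℝ}
    (hα : 0 ≤ α) (ha : ∀ i, |a i| ≤ α) : ‖WithLp.toLp 2 a‖ ≤ √(Fintype.card ι) * α := by
  rw [EuclideanSpace.norm_eq, ← Real.sqrt_sq hα, ← Real.sqrt_mul (Nat.cast_nonneg _)]
  gcongr
  calc ∑ i, ‖a i‖ ^ 2 ≤ ∑ _i : ι, α ^ 2 := by
        gcongr with i; exact ha i
    _ = _ := by simp

theorem abs_dotProduct_mulVec_le {N : ℕ} (Z : Matrix (Fin N) (Fin N) ℝ) (a b : Fin N → ℝ) :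
    |a ⬝ᵥ Z *ᵥ b| ≤ ‖WithLp.toLp 2 a‖ * opNorm Z * ‖WithLp.toLp 2 b‖ := by
  rw [← inner_toEuclideanCLM, mul_assoc]
  exact (abs_real_inner_le_norm _ _).trans <|
    mul_le_mul_of_nonneg_left (ContinuousLinearMap.le_opNorm _ _) (norm_nonneg _)

theorem abs_dotProduct_mulVec_le_of_abs_le {N : ℕ} (Z : Matrix (Fin N) (Fin N) ℝ)
    {a b : Fin N → ℝ} {α β : ℝ} (hα : 0 ≤ α) (hβ : 0 ≤ β)
    (ha : ∀ i, |a i| ≤ α) (hb : ∀ j, |b j| ≤ β) :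
    |a ⬝ᵥ Z *ᵥ b| ≤ N * opNorm Z * (α * β) := by
  have hZ : 0 ≤ opNorm Z := norm_nonneg _
  calc |a ⬝ᵥ Z *ᵥ b| ≤ (√N * α) * opNorm Z * (√N * β) :=
        (abs_dotProduct_mulVec_le Z a b).trans <| by
          gcongr
          · simpa using norm_toLp_le_sqrt_card_mul hα ha
          · simpa using norm_toLp_le_sqrt_card_mul hβ hb
    _ = N * opNorm Z * (α * β) := by
        linear_combination (α * opNorm Z * β) * Real.mul_self_sqrt (Nat.cast_nonneg (α := ℝ) N)

section HomSum

variable {V : Type*} [Fintype V] [DecidableEq V] {N : ℕ}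

noncomputable def homSum (r : V → V → Prop) [DecidableRel r] (X : Matrix (Fin N) (Fin N) ℝ) :
    ℝ :=
  ∑ φ : V → Fin N, ∏ q ∈ univ.filter (fun q : V × V => r q.1 q.2), X (φ q.1) (φ q.2)

theorem homOn_eq_homSum {n : ℕ} (H : SimpleGraph (Fin n)) [DecidableRel H.Adj]
    (s : Finset (Fin n)) (X : Matrix (Fin N) (Fin N) ℝ) :
    homOn H s X = homSum (fun a b : s => (a : Fin n) < b ∧ H.Adj a b) X :=
  rfl

theorem homSum_comp_equiv {V' : Type*} [Fintype V'] [DecidableEq V'] (e : V ≃ V')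
    (r : V' → V' → Prop) [DecidableRel r] (X : Matrix (Fin N) (Fin N) ℝ) :
    homSum (fun a b => r (e a) (e b)) X = homSum r X :=
  Fintype.sum_equiv (e.arrowCongr (Equiv.refl _)) _ _ fun φ =>
    prod_equiv (e.prodCongr e) (by simp) (by simp)

theorem homOn_univ {n : ℕ} (H : SimpleGraph (Fin n)) [DecidableRel H.Adj]
    (X : Matrix (Fin N) (Fin N) ℝ) :
    homOn H univ X = homSum (fun a b : Fin n => a < b ∧ H.Adj a b) X :=
  homSum_comp_equiv (Equiv.subtypeUnivEquiv mem_univ) (fun a b : Fin n => a < b ∧ H.Adj a b) X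

theorem hasDerivAt_homSum (r : V → V → Prop) [DecidableRel r] (W Z : Matrix (Fin N) (Fin N) ℝ) :
    HasDerivAt (fun t : ℝ => homSum r (W + t • Z))
      (∑ e ∈ univ.filter (fun q : V × V => r q.1 q.2), ∑ φ : V → Fin N,
        (∏ q ∈ (univ.filter (fun q : V × V => r q.1 q.2)).erase e, W (φ q.1) (φ q.2)) *
          Z (φ e.1) (φ e.2)) 0 := by
  rw [sum_comm]
  refine HasDerivAt.fun_sum fun φ _ => ?_
  have hentry : ∀ q : V × V, HasDerivAt (fun t : ℝ => (W + t • Z) (φ q.1) (φ q.2))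
      (Z (φ q.1) (φ q.2)) 0 := fun q => by
    simpa using
      ((hasDerivAt_id (0 : ℝ)).mul_const (Z (φ q.1) (φ q.2))).const_add (W (φ q.1) (φ q.2))
  simpa using HasDerivAt.fun_finsetProd fun q _ => hentry q

end HomSum

section SplitAtPair

variable {V α : Type*} [Fintype V] [DecidableEq V] {u v : V}

def splitAtPair (huv : u ≠ v) : (({u, v}ᶜ : Finset V) → α) × α × α ≃ (V → α) where
  toFun p x := if h : x ∈ ({u, v}ᶜ : Finset V) then p.1 ⟨x, h⟩ else if x = u then p.2.1 else p.2.2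
  invFun φ := (fun x => φ x, φ u, φ v)
  left_inv := by
    rintro ⟨ψ, i, j⟩
    refine Prod.ext (funext fun x => dif_pos x.2) ?_
    simp [huv.symm]
  right_inv φ := by
    funext x
    by_cases hu : x = u
    · subst hu; simp
    by_cases hv : x = v
    · subst hv; simp [hu]
    · simp [hu, hv]

variable (huv : u ≠ v)

theorem splitAtPair_apply_of_mem (p : (({u, v}ᶜ : Finset V) → α) × α × α) {x : V}
    (hx : x ∈ ({u, v}ᶜ : Finset V)) : splitAtPair huv p x = p.1 ⟨x, hx⟩ :=
  dif_pos hx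

@[simp]
theorem splitAtPair_apply_left (p : (({u, v}ᶜ : Finset V) → α) × α × α) :
    splitAtPair huv p u = p.2.1 := by
  simp [splitAtPair]

@[simp]
theorem splitAtPair_apply_right (p : (({u, v}ᶜ : Finset V) → α) × α × α) :
    splitAtPair huv p v = p.2.2 := by
  simp [splitAtPair, huv.symm]

theorem splitAtPair_apply_of_ne_right (ψ : ({u, v}ᶜ : Finset V) → α) (i j j' : α) {x : V}
    (hx : x ≠ v) : splitAtPair huv (ψ, i, j) x = splitAtPair huv (ψ, i, j') x := by
  simp only [splitAtPair, Equiv.coe_fn_mk]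
  split_ifs with hc hu
  · rfl
  · rfl
  · exact absurd (by simp [hu, hx]) hc

theorem splitAtPair_apply_of_ne_left (ψ : ({u, v}ᶜ : Finset V) → α) (i i' j : α) {x : V}
    (hx : x ≠ u) : splitAtPair huv (ψ, i, j) x = splitAtPair huv (ψ, i', j) x := by
  simp only [splitAtPair, Equiv.coe_fn_mk, hx, if_false]

theorem prod_splitAtPair_eq_mul {M : Type*} [CommMonoid M] {F : Finset (V × V)}
    (hF : ∀ q ∈ F, q.1 ∈ ({u, v}ᶜ : Finset V) ∨ q.2 ∈ ({u, v}ᶜ : Finset V))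
    (f : α → α → M) (ψ : ({u, v}ᶜ : Finset V) → α) (i j : α) :
    ∏ q ∈ F, f (splitAtPair huv (ψ, i, j) q.1) (splitAtPair huv (ψ, i, j) q.2) =
      (∏ q ∈ F.filter (fun q => q.1 ≠ v ∧ q.2 ≠ v),
          f (splitAtPair huv (ψ, i, i) q.1) (splitAtPair huv (ψ, i, i) q.2)) *
        ∏ q ∈ F.filter (fun q => ¬(q.1 ≠ v ∧ q.2 ≠ v)),
          f (splitAtPair huv (ψ, j, j) q.1) (splitAtPair huv (ψ, j, j) q.2) := by
  rw [← prod_filter_mul_prod_filter_not F (fun q => q.1 ≠ v ∧ q.2 ≠ v)]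
  congr 1
  · refine prod_congr rfl fun q hq => ?_
    obtain ⟨h1, h2⟩ := (mem_filter.1 hq).2
    rw [splitAtPair_apply_of_ne_right huv ψ i j i h1, splitAtPair_apply_of_ne_right huv ψ i j i h2]
  · refine prod_congr rfl fun q hq => ?_
    obtain ⟨hqF, hqv⟩ := mem_filter.1 hq
    -- an edge through v has its other end off {u, v}, so it does not see the value at u
    have hqu : q.1 ≠ u ∧ q.2 ≠ u := by
      have := hF q hqF
      simp only [mem_compl, mem_insert, mem_singleton] at this
      grind
    rw [splitAtPair_apply_of_ne_left huv ψ i j j hqu.1,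
      splitAtPair_apply_of_ne_left huv ψ i j j hqu.2]

theorem prod_splitAtPair_le_prod {f : α → α → ℝ} (hf : ∀ i j, f i j ∈ Set.Icc 0 1)
    (r : V → V → Prop) [DecidableRel r] {F : Finset (V × V)}
    (hF : ∀ a b : ({u, v}ᶜ : Finset V), r a b → ((a : V), (b : V)) ∈ F)
    (p : (({u, v}ᶜ : Finset V) → α) × α × α) :
    ∏ q ∈ F, f (splitAtPair huv p q.1) (splitAtPair huv p q.2) ≤
      ∏ q ∈ univ.filter (fun q : ({u, v}ᶜ : Finset V) × ({u, v}ᶜ : Finset V) => r q.1 q.2),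
        f (p.1 q.1) (p.1 q.2) := by
  let emb := (Function.Embedding.subtype (· ∈ ({u, v}ᶜ : Finset V))).prodMap
    (Function.Embedding.subtype (· ∈ ({u, v}ᶜ : Finset V)))
  let S := univ.filter fun q : ({u, v}ᶜ : Finset V) × ({u, v}ᶜ : Finset V) => r q.1 q.2
  calc ∏ q ∈ F, f (splitAtPair huv p q.1) (splitAtPair huv p q.2)
      ≤ ∏ q ∈ S.map emb, f (splitAtPair huv p q.1) (splitAtPair huv p q.2) := by
        refine prod_le_prod_of_subset_of_le_one ?_ (fun q _ => (hf _ _).1) (fun q _ _ => (hf _ _).2)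
        intro q hq
        obtain ⟨⟨a, b⟩, hab, rfl⟩ := mem_map.1 hq
        exact hF a b (mem_filter.1 hab).2
    _ = _ := by
        rw [prod_map]
        exact prod_congr rfl fun q _ => by
          simp [emb, splitAtPair_apply_of_mem huv p q.1.2, splitAtPair_apply_of_mem huv p q.2.2]

end SplitAtPair

section EdgeBound

variable {V : Type*} [Fintype V] [DecidableEq V] {u v : V}

theorem abs_sum_prod_erase_mul_le (huv : u ≠ v) (r : V → V → Prop) [DecidableRel r]
    (hr : ∀ a b, r a b → a ∈ ({u, v} : Finset V) → b ∈ ({u, v} : Finset V) → a = u ∧ b = v)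
    {N : ℕ} {W : Matrix (Fin N) (Fin N) ℝ} (hW : ∀ i j, W i j ∈ Set.Icc (0 : ℝ) 1)
    (Z : Matrix (Fin N) (Fin N) ℝ) :
    |∑ φ : V → Fin N,
        (∏ q ∈ (univ.filter fun q : V × V => r q.1 q.2).erase (u, v), W (φ q.1) (φ q.2)) *
          Z (φ u) (φ v)| ≤
      N * opNorm Z * homSum (fun a b : ({u, v}ᶜ : Finset V) => r a b) W := by
  set F := (univ.filter fun q : V × V => r q.1 q.2).erase (u, v)
  have hF : ∀ q ∈ F, q.1 ∈ ({u, v}ᶜ : Finset V) ∨ q.2 ∈ ({u, v}ᶜ : Finset V) := by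
    intro q hq
    obtain ⟨hne, hq⟩ := mem_erase.1 hq
    by_contra! h
    simp only [mem_compl, not_not] at h
    obtain ⟨h1, h2⟩ := hr q.1 q.2 (mem_filter.1 hq).2 h.1 h.2
    exact hne (Prod.ext h1 h2)
  set a := fun ψ i => ∏ q ∈ F.filter (fun q => q.1 ≠ v ∧ q.2 ≠ v),
    W (splitAtPair huv (ψ, i, i) q.1) (splitAtPair huv (ψ, i, i) q.2)
  set b := fun ψ j => ∏ q ∈ F.filter (fun q => ¬(q.1 ≠ v ∧ q.2 ≠ v)),
    W (splitAtPair huv (ψ, j, j) q.1) (splitAtPair huv (ψ, j, j) q.2)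
  have hsum : ∑ φ : V → Fin N, (∏ q ∈ F, W (φ q.1) (φ q.2)) * Z (φ u) (φ v) =
      ∑ ψ, a ψ ⬝ᵥ Z *ᵥ b ψ := by
    rw [← (splitAtPair huv).sum_comp, Fintype.sum_prod_type]
    refine sum_congr rfl fun ψ _ => ?_
    simp only [Fintype.sum_prod_type, splitAtPair_apply_left, splitAtPair_apply_right, dotProduct,
      mulVec, mul_sum]
    exact sum_congr rfl fun i _ => sum_congr rfl fun j _ => by
      rw [prod_splitAtPair_eq_mul huv hF W ψ i j]; ring
  have ha : ∀ ψ i, |a ψ i| ≤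
      ∏ q ∈ univ.filter (fun q : ({u, v}ᶜ : Finset V) × ({u, v}ᶜ : Finset V) => r q.1 q.2),
        W (ψ q.1) (ψ q.2) := fun ψ i => by
    rw [abs_of_nonneg (prod_nonneg fun q _ => (hW _ _).1)]
    refine prod_splitAtPair_le_prod huv hW r (fun x y hxy => ?_) (ψ, i, i)
    have hx := x.2
    have hy := y.2
    simp only [mem_compl, mem_insert, mem_singleton, not_or] at hx hy
    simp [F, hxy, hx.1, hx.2, hy.2]
  have hb : ∀ ψ j, |b ψ j| ≤ 1 := fun ψ j => by
    rw [abs_of_nonneg (prod_nonneg fun q _ => (hW _ _).1)]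
    exact prod_le_one (fun q _ => (hW _ _).1) (fun q _ => (hW _ _).2)
  rw [hsum, homSum, mul_sum]
  refine (abs_sum_le_sum_abs _ _).trans (sum_le_sum fun ψ _ => ?_)
  simpa using abs_dotProduct_mulVec_le_of_abs_le Z (prod_nonneg fun q _ => (hW _ _).1)
    zero_le_one (ha ψ) (hb ψ)

end EdgeBound

theorem directional_derivative_hom_le_general {n N : ℕ}
    (H : SimpleGraph (Fin n)) [DecidableRel H.Adj]
    (W Z : Matrix (Fin N) (Fin N) ℝ)
    (hW01 : ∀ i j, W i j ∈ Set.Icc (0:ℝ) 1) :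
    |deriv (fun t : ℝ => homOn H Finset.univ (W + t • Z)) 0| ≤
      (N : ℝ) * opNorm Z *
        ∑ e ∈ Finset.univ.filter
            (fun e : Fin n × Fin n => e.1 < e.2 ∧ H.Adj e.1 e.2),
          homOn H ({e.1, e.2}ᶜ) W := by
  simp only [homOn_univ]
  rw [(hasDerivAt_homSum _ W Z).deriv, mul_sum]
  refine (abs_sum_le_sum_abs _ _).trans (sum_le_sum fun ⟨u, v⟩ he => ?_)
  have huv : u < v := (mem_filter.1 he).2.1
  rw [homOn_eq_homSum]
  refine abs_sum_prod_erase_mul_le huv.ne (fun a b : Fin n => a < b ∧ H.Adj a b)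
    (fun a b hab ha hb => ?_) hW01 Z
  simp only [mem_insert, mem_singleton] at ha hb
  grind

/-- the directional derivative of `hom_H` at a symmetric `W` with
entries in `[0,1]`, in a symmetric direction `Z`, is bounded by
`N·‖Z‖_op·Σ_{e ∈ E(H)} hom_{H_{(e)}}(W)`, where `H_{(e)}` is the induced subgraph
on the vertices away from the endpoints of `e`. -/
theorem directional_derivative_hom_le {n N : ℕ}
    (H : SimpleGraph (Fin n)) [DecidableRel H.Adj]
    (W Z : Matrix (Fin N) (Fin N) ℝ) (hW : W.IsSymm) (hZ : Z.IsSymm)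
    (hW01 : ∀ i j, W i j ∈ Set.Icc (0:ℝ) 1) :
    |deriv (fun t : ℝ => homOn H Finset.univ (W + t • Z)) 0| ≤
      (N : ℝ) * opNorm Z *
        ∑ e ∈ Finset.univ.filter
            (fun e : Fin n × Fin n => e.1 < e.2 ∧ H.Adj e.1 e.2),
          homOn H ({e.1, e.2}ᶜ) W :=
  directional_derivative_hom_le_general H W Z hW01
end
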